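/- arXiv:1606.02688 — 5 statements merged into one kernel-verified Lean document; each statement's English description precedes it below -/
import Mathlib

section
/- In the graph K6 on vertices {s1,t1,s2,t2,s3,t3} (complete graph on 6 vertices), where the six edges of the cycle s1-t1-s2-t2-s3-t3-s1 are deletable and the remaining nine edges are undeletable: there is no set F of deletable edges containing all three of s1t1, s2t2, s3t3 such that K6 - F is C4-free. However, for each i in {1,2,3} there exists a set F_i of deletable edges with s_it_i ∉ F_i, containing both other edges s_jt_j (j ≠ i), such that K6 - F_i is C4-free. -/
set_option maxRecDepth 4000
set_option maxHeartbeats 1000000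

/-- The cycle on 4 vertices. -/
def C4 : SimpleGraph (Fin 4) :=
  SimpleGraph.fromEdgeSet {s(0,1), s(1,2), s(2,3), s(3,0)}

/-- `G` has no induced 4-cycle. -/
def C4Free {V : Type*} (G : SimpleGraph V) : Prop := IsEmpty (C4 ↪g G)

lemma c4free_of (G : SimpleGraph (Fin 6))
    (h : ∀ g : Fin 4 → Fin 6, Function.Injective g →
      ¬ ∀ a b, G.Adj (g a) (g b) ↔ C4.Adj a b) : C4Free G := by
  constructor
  intro f
  exact h f f.injective (fun a b => f.map_rel_iff)

def M1 (a b : Fin 6) : Prop :=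
  (a = 2 ∧ b = 3 ∨ a = 3 ∧ b = 2) ∨ (a = 3 ∧ b = 4 ∨ a = 4 ∧ b = 3) ∨
    (a = 4 ∧ b = 5 ∨ a = 5 ∧ b = 4)

def M2 (a b : Fin 6) : Prop :=
  (a = 4 ∧ b = 5 ∨ a = 5 ∧ b = 4) ∨ (a = 5 ∧ b = 0 ∨ a = 0 ∧ b = 5) ∨
    (a = 0 ∧ b = 1 ∨ a = 1 ∧ b = 0)

def M3 (a b : Fin 6) : Prop :=
  (a = 0 ∧ b = 1 ∨ a = 1 ∧ b = 0) ∨ (a = 1 ∧ b = 2 ∨ a = 2 ∧ b = 1) ∨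
    (a = 2 ∧ b = 3 ∨ a = 3 ∧ b = 2)

instance : DecidableRel M1 := fun _ _ => by unfold M1; infer_instance
instance : DecidableRel M2 := fun _ _ => by unfold M2; infer_instance
instance : DecidableRel M3 := fun _ _ => by unfold M3; infer_instance

lemma L1 : C4Free ((⊤ : SimpleGraph (Fin 6)).deleteEdges
    ({s(2,3), s(3,4), s(4,5)} : Set (Sym2 (Fin 6)))) := by
  apply c4free_of
  intro g hg h
  have h' : ∀ a b : Fin 4,
      ((g a ≠ g b) ∧ ¬ M1 (g a) (g b))
      ↔ (((a = 0 ∧ b = 1 ∨ a = 1 ∧ b = 0) ∨ (a = 1 ∧ b = 2 ∨ a = 2 ∧ b = 1) ∨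
          (a = 2 ∧ b = 3 ∨ a = 3 ∧ b = 2) ∨ (a = 3 ∧ b = 0 ∨ a = 0 ∧ b = 3)) ∧ a ≠ b) := by
    intro a b
    have := h a b
    simpa [C4, M1, SimpleGraph.deleteEdges_adj, SimpleGraph.fromEdgeSet_adj,
      Set.mem_insert_iff, Set.mem_singleton_iff, Sym2.eq, Sym2.rel_iff', Prod.ext_iff] using this
  have p01 := (h' 0 1).mpr (by decide)
  have p12 := (h' 1 2).mpr (by decide)
  have p23 := (h' 2 3).mpr (by decide)
  have p30 := (h' 3 0).mpr (by decide)
  have n02 : ¬ (g 0 ≠ g 2 ∧ ¬ M1 (g 0) (g 2)) := fun hc => absurd ((h' 0 2).mp hc) (by decide)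
  have n13 : ¬ (g 1 ≠ g 3 ∧ ¬ M1 (g 1) (g 3)) := fun hc => absurd ((h' 1 3).mp hc) (by decide)
  have d02 : g 0 ≠ g 2 := fun e => absurd (hg e) (by decide)
  have d13 : g 1 ≠ g 3 := fun e => absurd (hg e) (by decide)
  clear h h' hg
  revert p01 p12 p23 p30 n02 n13 d02 d13
  generalize g 0 = w
  generalize g 1 = x
  generalize g 2 = y
  generalize g 3 = z
  revert w x y z
  decide

lemma L2 : C4Free ((⊤ : SimpleGraph (Fin 6)).deleteEdges
    ({s(4,5), s(5,0), s(0,1)} : Set (Sym2 (Fin 6)))) := by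
  apply c4free_of
  intro g hg h
  have h' : ∀ a b : Fin 4,
      ((g a ≠ g b) ∧ ¬ M2 (g a) (g b))
      ↔ (((a = 0 ∧ b = 1 ∨ a = 1 ∧ b = 0) ∨ (a = 1 ∧ b = 2 ∨ a = 2 ∧ b = 1) ∨
          (a = 2 ∧ b = 3 ∨ a = 3 ∧ b = 2) ∨ (a = 3 ∧ b = 0 ∨ a = 0 ∧ b = 3)) ∧ a ≠ b) := by
    intro a b
    have := h a b
    simpa [C4, M2, SimpleGraph.deleteEdges_adj, SimpleGraph.fromEdgeSet_adj,
      Set.mem_insert_iff, Set.mem_singleton_iff, Sym2.eq, Sym2.rel_iff', Prod.ext_iff] using this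
  have p01 := (h' 0 1).mpr (by decide)
  have p12 := (h' 1 2).mpr (by decide)
  have p23 := (h' 2 3).mpr (by decide)
  have p30 := (h' 3 0).mpr (by decide)
  have n02 : ¬ (g 0 ≠ g 2 ∧ ¬ M2 (g 0) (g 2)) := fun hc => absurd ((h' 0 2).mp hc) (by decide)
  have n13 : ¬ (g 1 ≠ g 3 ∧ ¬ M2 (g 1) (g 3)) := fun hc => absurd ((h' 1 3).mp hc) (by decide)
  have d02 : g 0 ≠ g 2 := fun e => absurd (hg e) (by decide)
  have d13 : g 1 ≠ g 3 := fun e => absurd (hg e) (by decide)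
  clear h h' hg
  revert p01 p12 p23 p30 n02 n13 d02 d13
  generalize g 0 = w
  generalize g 1 = x
  generalize g 2 = y
  generalize g 3 = z
  revert w x y z
  decide

lemma L3 : C4Free ((⊤ : SimpleGraph (Fin 6)).deleteEdges
    ({s(0,1), s(1,2), s(2,3)} : Set (Sym2 (Fin 6)))) := by
  apply c4free_of
  intro g hg h
  have h' : ∀ a b : Fin 4,
      ((g a ≠ g b) ∧ ¬ M3 (g a) (g b))
      ↔ (((a = 0 ∧ b = 1 ∨ a = 1 ∧ b = 0) ∨ (a = 1 ∧ b = 2 ∨ a = 2 ∧ b = 1) ∨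
          (a = 2 ∧ b = 3 ∨ a = 3 ∧ b = 2) ∨ (a = 3 ∧ b = 0 ∨ a = 0 ∧ b = 3)) ∧ a ≠ b) := by
    intro a b
    have := h a b
    simpa [C4, M3, SimpleGraph.deleteEdges_adj, SimpleGraph.fromEdgeSet_adj,
      Set.mem_insert_iff, Set.mem_singleton_iff, Sym2.eq, Sym2.rel_iff', Prod.ext_iff] using this
  have p01 := (h' 0 1).mpr (by decide)
  have p12 := (h' 1 2).mpr (by decide)
  have p23 := (h' 2 3).mpr (by decide)
  have p30 := (h' 3 0).mpr (by decide)
  have n02 : ¬ (g 0 ≠ g 2 ∧ ¬ M3 (g 0) (g 2)) := fun hc => absurd ((h' 0 2).mp hc) (by decide)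
  have n13 : ¬ (g 1 ≠ g 3 ∧ ¬ M3 (g 1) (g 3)) := fun hc => absurd ((h' 1 3).mp hc) (by decide)
  have d02 : g 0 ≠ g 2 := fun e => absurd (hg e) (by decide)
  have d13 : g 1 ≠ g 3 := fun e => absurd (hg e) (by decide)
  clear h h' hg
  revert p01 p12 p23 p30 n02 n13 d02 d13
  generalize g 0 = w
  generalize g 1 = x
  generalize g 2 = y
  generalize g 3 = z
  revert w x y z
  decide

lemma neg_part (F : Set (Sym2 (Fin 6)))
    (hF : F ⊆ ({s(0,1), s(1,2), s(2,3), s(3,4), s(4,5), s(5,0)} : Set (Sym2 (Fin 6))))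
    (h01 : s((0:Fin 6),1) ∈ F) (h23 : s((2:Fin 6),3) ∈ F) (h45 : s((4:Fin 6),5) ∈ F)
    (hfree : C4Free ((⊤ : SimpleGraph (Fin 6)).deleteEdges F)) : False := by
  have nf : ∀ a b : Fin 6, s(a,b) ∉ ({s(0,1), s(1,2), s(2,3), s(3,4), s(4,5), s(5,0)} :
      Set (Sym2 (Fin 6))) → s(a,b) ∉ F := fun a b h hh => h (hF hh)
  by_cases h12 : s((1:Fin 6),2) ∈ F
  · exact hfree.false ⟨⟨![1,4,2,5], by decide⟩, by
      intro a b
      fin_cases a <;> fin_cases b <;>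
        simp [C4, SimpleGraph.deleteEdges_adj, SimpleGraph.fromEdgeSet_adj, Set.mem_insert_iff,
          Set.mem_singleton_iff, Sym2.eq, Sym2.rel_iff', Prod.ext_iff, Sym2.eq_swap] <;>
        first
          | assumption
          | exact nf _ _ (by simp [Set.mem_insert_iff, Set.mem_singleton_iff, Sym2.eq,
              Sym2.rel_iff', Prod.ext_iff])⟩
  · exact hfree.false ⟨⟨![0,2,1,3], by decide⟩, by
      intro a b
      fin_cases a <;> fin_cases b <;>
        simp [C4, SimpleGraph.deleteEdges_adj, SimpleGraph.fromEdgeSet_adj, Set.mem_insert_iff,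
          Set.mem_singleton_iff, Sym2.eq, Sym2.rel_iff', Prod.ext_iff, Sym2.eq_swap] <;>
        first
          | assumption
          | exact nf _ _ (by simp [Set.mem_insert_iff, Set.mem_singleton_iff, Sym2.eq,
              Sym2.rel_iff', Prod.ext_iff])⟩

/-- The clause gadget for Sandwich C4-Free Edge Deletion: in `K6` on vertices
`s1=0, t1=1, s2=2, t2=3, s3=4, t3=5`, with deletable edges forming the cycle
`s1-t1-s2-t2-s3-t3-s1`, there is no set `F` of deletable edges containing all
three of `s1t1, s2t2, s3t3` with `K6 - F` being `C4`-free; but for each `i`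
there is such a set `F i` omitting `s_i t_i` and containing the other two. -/
theorem clause_gadget_C4_deletion :
    (¬ ∃ F ⊆ ({s(0,1), s(1,2), s(2,3), s(3,4), s(4,5), s(5,0)} : Set (Sym2 (Fin 6))),
        (∀ i : Fin 3, (![s(0,1), s(2,3), s(4,5)] : Fin 3 → Sym2 (Fin 6)) i ∈ F) ∧
        C4Free ((⊤ : SimpleGraph (Fin 6)).deleteEdges F)) ∧
    (∀ i : Fin 3, ∃ F ⊆ ({s(0,1), s(1,2), s(2,3), s(3,4), s(4,5), s(5,0)} : Set (Sym2 (Fin 6))),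
        (![s(0,1), s(2,3), s(4,5)] : Fin 3 → Sym2 (Fin 6)) i ∉ F ∧
        (∀ j : Fin 3, j ≠ i → (![s(0,1), s(2,3), s(4,5)] : Fin 3 → Sym2 (Fin 6)) j ∈ F) ∧
        C4Free ((⊤ : SimpleGraph (Fin 6)).deleteEdges F)) := by
  constructor
  · rintro ⟨F, hF, hm, hfree⟩
    exact neg_part F hF (hm 0) (hm 1) (hm 2) hfree
  · intro i
    fin_cases i
    · refine ⟨({s(2,3), s(3,4), s(4,5)} : Set (Sym2 (Fin 6))), ?_, ?_, ?_, L1⟩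
      · intro e he
        simp only [Set.mem_insert_iff, Set.mem_singleton_iff] at he ⊢
        tauto
      · simp [Set.mem_insert_iff, Set.mem_singleton_iff, Sym2.eq, Sym2.rel_iff', Prod.ext_iff]
      · intro j hj
        fin_cases j
        · simp at hj
        · simp [Set.mem_insert_iff, Set.mem_singleton_iff]
        · simp [Set.mem_insert_iff, Set.mem_singleton_iff]
    · refine ⟨({s(4,5), s(5,0), s(0,1)} : Set (Sym2 (Fin 6))), ?_, ?_, ?_, L2⟩
      · intro e he
        simp only [Set.mem_insert_iff, Set.mem_singleton_iff] at he ⊢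
        tauto
      · simp [Set.mem_insert_iff, Set.mem_singleton_iff, Sym2.eq, Sym2.rel_iff', Prod.ext_iff]
      · intro j hj
        fin_cases j
        · simp [Set.mem_insert_iff, Set.mem_singleton_iff]
        · simp at hj
        · simp [Set.mem_insert_iff, Set.mem_singleton_iff]
    · refine ⟨({s(0,1), s(1,2), s(2,3)} : Set (Sym2 (Fin 6))), ?_, ?_, ?_, L3⟩
      · intro e he
        simp only [Set.mem_insert_iff, Set.mem_singleton_iff] at he ⊢
        tauto
      · simp [Set.mem_insert_iff, Set.mem_singleton_iff, Sym2.eq, Sym2.rel_iff', Prod.ext_iff]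
      · intro j hj
        fin_cases j
        · simp [Set.mem_insert_iff, Set.mem_singleton_iff]
        · simp [Set.mem_insert_iff, Set.mem_singleton_iff]
        · simp at hj
end

section
/- Let G be a graph with a designated set of deletable edges, and suppose every 4-cycle subgraph (not necessarily induced) of G contains an undeletable edge. Construct G' by adding, for each undeletable edge uv and each i in {1,...,N}, two new vertices a_i and b_i with edges u a_i, u b_i, v b_i, a_i b_i (gadgets pairwise disjoint and non-adjacent). If F is a set of deletable edges of G such that G - F is C4-free, then G' - F is house-free. -/
/-- The house graph: a 4-cycle with a fifth vertex adjacent to two adjacent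
cycle vertices (the complement of `P5`). -/
def house : SimpleGraph (Fin 5) :=
  SimpleGraph.fromEdgeSet {s(0,1), s(1,2), s(2,3), s(3,0), s(0,4), s(1,4)}

/-- The graph `G'` obtained from `G` by attaching, for each undeletable edge `uv`
(i.e. edge not in the deletable set `D`) and each `i < N`, a gadget of two new
vertices `a_i` (the `false` copy) and `b_i` (the `true` copy) with edges
`u aᵢ, u bᵢ, v bᵢ, aᵢ bᵢ`; the gadgets are pairwise disjoint and non-adjacent. -/
def delGadget {V : Type*} (G : SimpleGraph V) (D : Set (Sym2 V)) (N : ℕ) :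
    SimpleGraph (V ⊕ ({p : V × V // G.Adj p.1 p.2 ∧ s(p.1, p.2) ∉ D} × Fin N × Bool)) :=
  SimpleGraph.fromRel (fun x y =>
    match x, y with
    | Sum.inl a, Sum.inl b => G.Adj a b
    | Sum.inl a, Sum.inr (e, _, false) => a = e.1.1
    | Sum.inl a, Sum.inr (e, _, true) => a = e.1.1 ∨ a = e.1.2
    | Sum.inr (e, i, false), Sum.inr (e', j, true) => e = e' ∧ i = j
    | _, _ => False)

/-!
The 4-cycle `0 1 2 3` of the house is induced, so it suffices that `G' - F` has no induced
`C4`. No gadget vertex lies on an induced `C4` of `G' - F`: the two neighbours `u, bᵢ` of `aᵢ`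
are adjacent, and the only non-adjacent pair among the neighbours `u, v, aᵢ` of `bᵢ` is
`v, aᵢ`, whose only common neighbour besides `bᵢ` is `u`, which is adjacent to `bᵢ`. Here `uv`
survives in `G' - F` because it is undeletable and `F ⊆ D`. Hence every induced `C4` of
`G' - F` is an induced `C4` of `G - F`.
-/

namespace SimpleGraph

def LiesOnInducedC4 {V : Type*} (H : SimpleGraph V) (w : V) : Prop :=
  ∃ x y z, H.Adj w x ∧ H.Adj x y ∧ H.Adj y z ∧ H.Adj z w ∧ x ≠ z ∧ w ≠ y ∧
    ¬H.Adj x z ∧ ¬H.Adj w y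

lemma LiesOnInducedC4.of_embedding {V : Type*} {H : SimpleGraph V} (f : C4 ↪g H) (k : Fin 4) :
    H.LiesOnInducedC4 (f k) := by
  refine ⟨f (k + 1), f (k + 2), f (k + 3), ?_⟩
  simp only [f.map_adj_iff, f.injective.ne_iff]
  fin_cases k <;> simp [C4]

namespace Embedding

variable {U V W : Type*} {G : SimpleGraph U} {H : SimpleGraph V} {K : SimpleGraph W}

noncomputable def factorThrough (φ : G ↪g H) (f : K ↪g H) (hf : ∀ x, ∃ y, φ y = f x) :
    K ↪g G where
  toFun x := (hf x).choose
  inj' x y hxy := f.injective <| by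
    rw [← (hf x).choose_spec, ← (hf y).choose_spec]
    exact congrArg φ hxy
  map_rel_iff' {x y} := by
    change G.Adj (hf x).choose (hf y).choose ↔ K.Adj x y
    rw [← φ.map_adj_iff, (hf x).choose_spec, (hf y).choose_spec, f.map_adj_iff]

end Embedding

end SimpleGraph

def C4.toHouse : C4 ↪g house where
  toFun := Fin.castSucc
  inj' := Fin.castSucc_injective 4
  map_rel_iff' {i j} := by fin_cases i <;> fin_cases j <;> simp [C4, house]

lemma isEmpty_house_embedding_of_isEmpty_C4_embedding {V : Type*} {H : SimpleGraph V}
    (h : IsEmpty (C4 ↪g H)) : IsEmpty (house ↪g H) :=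
  ⟨fun f => h.false (f.comp C4.toHouse)⟩

lemma Sym2.mk_inr_notMem_map_inl_image {α β : Type*} (F : Set (Sym2 α)) (b : β) (t : α ⊕ β) :
    s(Sum.inr b, t) ∉ Sym2.map Sum.inl '' F := by
  rintro ⟨x, -, hx⟩
  obtain ⟨a, -, ha⟩ := Sym2.mem_map.1 (hx ▸ Sym2.mem_mk_left (Sum.inr b) t)
  exact Sum.inl_ne_inr ha

namespace delGadget

open Sum

variable {V : Type*} {G : SimpleGraph V} {D F : Set (Sym2 V)} {N : ℕ}
  {e : {p : V × V // G.Adj p.1 p.2 ∧ s(p.1, p.2) ∉ D}} {i : Fin N}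

lemma deleteEdges_adj_inl_inl {a b : V} :
    ((delGadget G D N).deleteEdges (Sym2.map inl '' F)).Adj (inl a) (inl b) ↔
      (G.deleteEdges F).Adj a b := by
  rw [SimpleGraph.deleteEdges_adj, SimpleGraph.deleteEdges_adj, ← Sym2.map_mk,
    (Sym2.map.injective inl_injective).mem_set_image]
  simp only [delGadget, SimpleGraph.fromRel_adj, ne_eq, inl.injEq, G.adj_comm b a, or_self,
    and_iff_right_of_imp G.ne_of_adj]

lemma deleteEdges_adj_inr {g t} :
    ((delGadget G D N).deleteEdges (Sym2.map inl '' F)).Adj (inr g) t ↔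
      (delGadget G D N).Adj (inr g) t := by
  rw [SimpleGraph.deleteEdges_adj, and_iff_left (Sym2.mk_inr_notMem_map_inl_image F g t)]

lemma deleteEdges_adj_inr_false {t} :
    ((delGadget G D N).deleteEdges (Sym2.map inl '' F)).Adj (inr (e, i, false)) t ↔
      t = inl e.1.1 ∨ t = inr (e, i, true) := by
  rw [deleteEdges_adj_inr]
  rcases t with a | ⟨e', j, _ | _⟩ <;> simp [delGadget, eq_comm]

lemma deleteEdges_adj_inr_true {t} :
    ((delGadget G D N).deleteEdges (Sym2.map inl '' F)).Adj (inr (e, i, true)) t ↔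
      t = inl e.1.1 ∨ t = inl e.1.2 ∨ t = inr (e, i, false) := by
  rw [deleteEdges_adj_inr]
  rcases t with a | ⟨e', j, _ | _⟩ <;> simp [delGadget, eq_comm]

def inlEmbedding : G.deleteEdges F ↪g (delGadget G D N).deleteEdges (Sym2.map inl '' F) where
  toFun := inl
  inj' := inl_injective
  map_rel_iff' := deleteEdges_adj_inl_inl

lemma exists_inl_of_liesOnInducedC4 (hF : F ⊆ D) {w}
    (hw : ((delGadget G D N).deleteEdges (Sym2.map inl '' F)).LiesOnInducedC4 w) :
    ∃ a, inl a = w := by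
  set H := (delGadget G D N).deleteEdges (Sym2.map inl '' F)
  obtain ⟨x, y, z, hwx, hxy, hyz, hzw, hxz, hwy, hnxz, hnwy⟩ := hw
  rcases w with a | ⟨e, i, _ | _⟩
  · exact ⟨a, rfl⟩
  · exfalso
    have hub : H.Adj (inl e.1.1) (inr (e, i, true)) :=
      (deleteEdges_adj_inr_true.2 (Or.inl rfl)).symm
    rw [deleteEdges_adj_inr_false] at hwx
    rw [H.adj_comm, deleteEdges_adj_inr_false] at hzw
    rcases hwx with rfl | rfl <;> rcases hzw with rfl | rfl
    exacts [hxz rfl, hnxz hub, hnxz hub.symm, hxz rfl]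
  · exfalso
    have hub : H.Adj (inl e.1.1) (inr (e, i, true)) :=
      (deleteEdges_adj_inr_true.2 (Or.inl rfl)).symm
    have hua : H.Adj (inl e.1.1) (inr (e, i, false)) :=
      (deleteEdges_adj_inr_false.2 (Or.inl rfl)).symm
    have huv : H.Adj (inl e.1.1) (inl e.1.2) :=
      deleteEdges_adj_inl_inl.2 (SimpleGraph.deleteEdges_adj.2 ⟨e.2.1, fun h => e.2.2 (hF h)⟩)
    have hy : ∀ y, H.Adj y (inr (e, i, false)) → inr (e, i, true) ≠ y → y = inl e.1.1 := by
      intro y hy hne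
      rw [H.adj_comm, deleteEdges_adj_inr_false] at hy
      exact hy.resolve_right hne.symm
    rw [deleteEdges_adj_inr_true] at hwx
    rw [H.adj_comm, deleteEdges_adj_inr_true] at hzw
    obtain ⟨rfl, rfl⟩ | ⟨rfl, rfl⟩ :
        x = inl e.1.2 ∧ z = inr (e, i, false) ∨ x = inr (e, i, false) ∧ z = inl e.1.2 := by
      rcases hwx with rfl | rfl | rfl <;> rcases hzw with rfl | rfl | rfl <;>
        first
          | exact absurd rfl hxz
          | exact absurd huv hnxz | exact absurd huv.symm hnxz
          | exact absurd hua hnxz | exact absurd hua.symm hnxz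
          | simp
    · exact hnwy (hy y hyz hwy ▸ hub.symm)
    · exact hnwy (hy y hxy.symm hwy ▸ hub.symm)

lemma isEmpty_C4_embedding_deleteEdges (hF : F ⊆ D) (hfree : IsEmpty (C4 ↪g G.deleteEdges F)) :
    IsEmpty (C4 ↪g (delGadget G D N).deleteEdges (Sym2.map inl '' F)) :=
  ⟨fun f => hfree.false <| inlEmbedding.factorThrough f fun k =>
    exists_inl_of_liesOnInducedC4 hF (.of_embedding f k)⟩

end delGadget

theorem gadget_deletion_house_free_general {V : Type*} (G : SimpleGraph V)
    (D : Set (Sym2 V)) (N : ℕ)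
    (F : Set (Sym2 V)) (hF : F ⊆ D)
    (hfree : IsEmpty (C4 ↪g G.deleteEdges F)) :
    IsEmpty (house ↪g (delGadget G D N).deleteEdges (Sym2.map Sum.inl '' F)) :=
  isEmpty_house_embedding_of_isEmpty_C4_embedding
    (delGadget.isEmpty_C4_embedding_deleteEdges hF hfree)

/-- If every (not necessarily induced) 4-cycle subgraph of `G` contains an
undeletable edge, and `F` is a set of deletable edges such that `G - F` is
`C4`-free, then `G' - F` is house-free. -/
theorem gadget_deletion_house_free {V : Type*} (G : SimpleGraph V)
    (D : Set (Sym2 V)) (hD : D ⊆ G.edgeSet) (N : ℕ)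
    (h4 : ∀ a b c d : V, a ≠ b → a ≠ c → a ≠ d → b ≠ c → b ≠ d → c ≠ d →
      G.Adj a b → G.Adj b c → G.Adj c d → G.Adj d a →
      s(a,b) ∉ D ∨ s(b,c) ∉ D ∨ s(c,d) ∉ D ∨ s(d,a) ∉ D)
    (F : Set (Sym2 V)) (hF : F ⊆ D)
    (hfree : IsEmpty (C4 ↪g G.deleteEdges F)) :
    IsEmpty (house ↪g (delGadget G D N).deleteEdges (Sym2.map Sum.inl '' F)) :=
  gadget_deletion_house_free_general G D N F hF hfree
end

section
/- Let G be a graph with designated undeletable edges, and let G' be obtained from G by adding, for each undeletable edge uv, N+2 pairwise non-adjacent new vertices each adjacent exactly to u and v. If F is a set of at most N edges of G' such that G' - F contains no induced C4, then F contains no undeletable edge of G. -/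
/-- The graph `G'` obtained from `G` by adding, for each undeletable edge `uv`
(edge in the set `U`), `M` pairwise non-adjacent new vertices, each adjacent
exactly to `u` and `v`. -/
def addWitnesses {V : Type*} (G : SimpleGraph V) (U : Set (Sym2 V)) (M : ℕ) :
    SimpleGraph (V ⊕ ({p : V × V // G.Adj p.1 p.2 ∧ s(p.1, p.2) ∈ U} × Fin M)) :=
  SimpleGraph.fromRel (fun x y =>
    match x, y with
    | Sum.inl a, Sum.inl b => G.Adj a b
    | Sum.inl a, Sum.inr (e, _) => a = e.1.1 ∨ a = e.1.2
    | _, _ => False)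

lemma c4_embed {W : Type*} {D : SimpleGraph W} {a b c d : W}
    (hab : D.Adj a b) (hbc : D.Adj b c) (hcd : D.Adj c d) (hda : D.Adj d a)
    (hac : ¬ D.Adj a c) (hbd : ¬ D.Adj b d)
    (hac' : a ≠ c) (hbd' : b ≠ d) : Nonempty (C4 ↪g D) := by
  refine ⟨⟨⟨![a,b,c,d], ?_⟩, ?_⟩⟩
  · intro x y
    fin_cases x <;> fin_cases y <;>
      simp_all [hab.ne, hab.ne', hbc.ne, hbc.ne', hcd.ne, hcd.ne', hda.ne, hda.ne', Fin.ext_iff] <;> tauto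
  · intro x y
    fin_cases x <;> fin_cases y <;>
      simp_all [C4, SimpleGraph.fromEdgeSet_adj] <;> tauto


/-- If `G'` is obtained from `G` by adding `N + 2` new vertices adjacent exactly
to `u` and `v` for each undeletable edge `uv`, and `F` is a set of at most `N`
edges of `G'` with `G' - F` having no induced `C4`, then `F` contains no
undeletable edge of `G`. -/
theorem no_undeletable_edge_deleted {V : Type*} (G : SimpleGraph V)
    (U : Set (Sym2 V)) (hU : U ⊆ G.edgeSet) (N : ℕ)
    (F : Set (Sym2 (V ⊕ ({p : V × V // G.Adj p.1 p.2 ∧ s(p.1, p.2) ∈ U} × Fin (N + 2)))))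
    (hFsub : F ⊆ (addWitnesses G U (N + 2)).edgeSet)
    (hFfin : F.Finite) (hFcard : F.ncard ≤ N)
    (hfree : IsEmpty (C4 ↪g (addWitnesses G U (N + 2)).deleteEdges F)) :
    ∀ e ∈ U, Sym2.map Sum.inl e ∉ F := by
  classical
  intro e he hmem
  induction e using Sym2.ind with
  | _ u v =>
  have hadj : G.Adj u v := G.mem_edgeSet.1 (hU he)
  set G' := addWitnesses G U (N + 2) with hG'
  set p : {p : V × V // G.Adj p.1 p.2 ∧ s(p.1, p.2) ∈ U} := ⟨(u, v), hadj, he⟩ with hp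
  set w : Fin (N + 2) → (V ⊕ _) := fun i => Sum.inr (p, i) with hw
  have hmem' : s(Sum.inl u, Sum.inl v) ∈ F := by
    simpa using hmem
  -- no two distinct witnesses in one edge of F
  have hnoWW : ∀ i j : Fin (N + 2), ¬ G'.Adj (w i) (w j) := by
    intro i j
    simp [hG', addWitnesses, SimpleGraph.fromRel_adj, hw]
  have hedge : ∀ a ∈ F, ∀ i j : Fin (N + 2), w i ∈ a → w j ∈ a → i = j := by
    intro a haF
    induction a using Sym2.ind with
    | _ x y =>
    intro i j hi hj
    by_contra hne
    have hxy : G'.Adj x y := hFsub haF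
    have hwij : w i ≠ w j := by simp [hw, hne]
    rcases Sym2.mem_iff.1 hi with hix | hiy <;>
      rcases Sym2.mem_iff.1 hj with hjx | hjy
    · exact hwij (hix.trans hjx.symm)
    · exact hnoWW i j (by rw [hix, hjy]; exact hxy)
    · exact hnoWW j i (by rw [hjx, hiy]; exact hxy)
    · exact hwij (hiy.trans hjy.symm)
  -- bad indices
  set badF : Finset (Fin (N + 2)) := Finset.univ.filter (fun i => ∃ a ∈ F, w i ∈ a) with hbadF
  set FS := hFfin.toFinset with hFS
  have hcardFS : FS.card ≤ N := by
    rw [Set.ncard_eq_toFinset_card F hFfin] at hFcard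
    exact hFcard
  set g : Fin (N + 2) → Sym2 (V ⊕ _) :=
    fun i => if h : ∃ a ∈ F, w i ∈ a then h.choose else s(w i, w i) with hgdef
  have hcardbad : badF.card ≤ FS.card - 1 := by
    have herase : (FS.erase s(Sum.inl u, Sum.inl v)).card = FS.card - 1 :=
      Finset.card_erase_of_mem (by simp [hFS, hmem'])
    rw [← herase]
    apply Finset.card_le_card_of_injOn g
    · intro i hi
      have h : ∃ a ∈ F, w i ∈ a := by simpa [hbadF] using hi
      have h1 : g i ∈ F := by simp only [hgdef, dif_pos h]; exact h.choose_spec.1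
      have h2 : w i ∈ g i := by simp only [hgdef, dif_pos h]; exact h.choose_spec.2
      refine Finset.mem_erase.2 ⟨?_, by simp [hFS, h1]⟩
      intro hcon
      rw [hcon] at h2
      rcases Sym2.mem_iff.1 h2 with h' | h' <;> simp [hw] at h'
    · intro i hi j hj hij
      have h : ∃ a ∈ F, w i ∈ a := by simpa [hbadF] using hi
      have h' : ∃ a ∈ F, w j ∈ a := by simpa [hbadF] using hj
      have h1 : g i ∈ F := by simp only [hgdef, dif_pos h]; exact h.choose_spec.1
      have h2 : w i ∈ g i := by simp only [hgdef, dif_pos h]; exact h.choose_spec.2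
      have h3 : w j ∈ g j := by simp only [hgdef, dif_pos h']; exact h'.choose_spec.2
      exact hedge (g i) h1 i j h2 (hij ▸ h3)
  have hcard2 : 1 < badFᶜ.card := by
    have h1 : badFᶜ.card = (N + 2) - badF.card := by
      rw [Finset.card_compl]; simp
    have hN1 : 1 ≤ FS.card := Finset.card_pos.2 ⟨s(Sum.inl u, Sum.inl v), by simp [hFS, hmem']⟩
    omega
  obtain ⟨i, hi, j, hj, hij⟩ := Finset.one_lt_card.1 hcard2
  have hgoodi : ∀ a ∈ F, w i ∉ a := by
    have := Finset.mem_compl.1 hi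
    simp only [hbadF, Finset.mem_filter, Finset.mem_univ, true_and, not_exists] at this
    intro a ha hm; exact this a ⟨ha, hm⟩
  have hgoodj : ∀ a ∈ F, w j ∉ a := by
    have := Finset.mem_compl.1 hj
    simp only [hbadF, Finset.mem_filter, Finset.mem_univ, true_and, not_exists] at this
    intro a ha hm; exact this a ⟨ha, hm⟩
  -- adjacency facts in G'
  have hAuw : ∀ k : Fin (N + 2), G'.Adj (Sum.inl u) (w k) := by
    intro k; simp [hG', addWitnesses, SimpleGraph.fromRel_adj, hw, hp]
  have hAvw : ∀ k : Fin (N + 2), G'.Adj (Sum.inl v) (w k) := by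
    intro k; simp [hG', addWitnesses, SimpleGraph.fromRel_adj, hw, hp]
  set D := G'.deleteEdges F with hD
  have hDuw : ∀ k : Fin (N + 2), (∀ a ∈ F, w k ∉ a) → D.Adj (Sum.inl u) (w k) := by
    intro k hk
    rw [hD, SimpleGraph.deleteEdges_adj]
    exact ⟨hAuw k, fun hf => hk _ hf (by simp)⟩
  have hDvw : ∀ k : Fin (N + 2), (∀ a ∈ F, w k ∉ a) → D.Adj (Sum.inl v) (w k) := by
    intro k hk
    rw [hD, SimpleGraph.deleteEdges_adj]
    exact ⟨hAvw k, fun hf => hk _ hf (by simp)⟩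
  have hnuv : ¬ D.Adj (Sum.inl u) (Sum.inl v) := by
    rw [hD, SimpleGraph.deleteEdges_adj]
    exact fun h => h.2 hmem'
  have hnij : ¬ D.Adj (w i) (w j) := by
    rw [hD, SimpleGraph.deleteEdges_adj]
    exact fun h => hnoWW i j h.1
  have hwij : w i ≠ w j := by simp [hw, hij]
  have huv : (Sum.inl u : V ⊕ ({p : V × V // G.Adj p.1 p.2 ∧ s(p.1, p.2) ∈ U} × Fin (N + 2))) ≠ Sum.inl v := by simp [hadj.ne]
  exact hfree.elim (c4_embed (hDuw i hgoodi) (hDvw i hgoodi).symm (hDvw j hgoodj)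
    (hDuw j hgoodj).symm hnuv hnij huv hwij).some
end

section
/- Let G be a graph with designated undeletable edges, and let G' be obtained from G by adding, for each undeletable edge uv, N+2 pairwise non-adjacent new vertices each adjacent exactly to u and v. If F is a set of edges of G containing no undeletable edge and G - F is C4-free, then G' - F is C4-free. -/
open SimpleGraph

namespace SimpleGraph.Embedding

variable {α β γ : Type*} {A : SimpleGraph α} {H : SimpleGraph β} {K : SimpleGraph γ}

theorem isClique_neighborSet_of_isClique_neighborSet_apply (f : A ↪g H) {a : α}
    (h : H.IsClique (H.neighborSet (f a))) : A.IsClique (A.neighborSet a) :=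
  fun _ hx _ hy hxy =>
    f.map_adj_iff.1 (h (f.map_adj_iff.2 hx) (f.map_adj_iff.2 hy) (f.injective.ne hxy))

theorem isIndContained_of_forall_mem_range (e : K ↪g H) (f : A ↪g H)
    (hf : ∀ a, f a ∈ Set.range e) : A ⊴ K := by
  choose g hg using hf
  refine ⟨⟨⟨g, fun a b hab => f.injective ?_⟩, fun {a b} => ?_⟩⟩
  · rw [← hg a, ← hg b, hab]
  · change K.Adj (g a) (g b) ↔ _
    rw [← e.map_adj_iff, hg, hg, f.map_adj_iff]

end SimpleGraph.Embedding

theorem C4_not_isClique_neighborSet (i : Fin 4) : ¬ C4.IsClique (C4.neighborSet i) := by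
  intro h
  have := @h (i + 1) (by fin_cases i <;> simp [C4]) (i + 3) (by fin_cases i <;> simp [C4])
    (by fin_cases i <;> decide)
  fin_cases i <;> simp [C4] at this

namespace addWitnesses

variable {V : Type*} {G : SimpleGraph V} {U : Set (Sym2 V)} {M : ℕ} {F : Set (Sym2 V)}

theorem deleteEdges_adj_inl_inl {a b : V} :
    ((addWitnesses G U M).deleteEdges (Sym2.map Sum.inl '' F)).Adj (.inl a) (.inl b) ↔
      (G.deleteEdges F).Adj a b := by
  rw [deleteEdges_adj, deleteEdges_adj, ← Sym2.map_mk,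
    (Sym2.map.injective Sum.inl_injective).mem_set_image]
  simp only [addWitnesses, fromRel_adj, ne_eq, Sum.inl.injEq, G.adj_comm b a, or_self]
  exact ⟨fun ⟨⟨_, h⟩, hF⟩ => ⟨h, hF⟩, fun ⟨h, hF⟩ => ⟨⟨h.ne, h⟩, hF⟩⟩

theorem deleteEdges_neighborSet_inr (w) :
    ((addWitnesses G U M).deleteEdges (Sym2.map Sum.inl '' F)).neighborSet (.inr w) =
      {.inl w.1.1.1, .inl w.1.1.2} := by
  ext x
  have hx : s(.inr w, x) ∉ Sym2.map Sum.inl '' F := by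
    rintro ⟨e, -, he⟩
    obtain ⟨y, -, hy⟩ := Sym2.mem_map.1 (he ▸ Sym2.mem_mk_left _ _)
    exact Sum.inl_ne_inr hy
  rw [mem_neighborSet, deleteEdges_adj, and_iff_left hx]
  rcases x with a | w'
  · simp [addWitnesses, eq_comm]
  · simp [addWitnesses]

theorem isClique_deleteEdges_neighborSet_inr (hFU : ∀ e ∈ F, e ∉ U) (w) :
    ((addWitnesses G U M).deleteEdges (Sym2.map Sum.inl '' F)).IsClique
      (((addWitnesses G U M).deleteEdges (Sym2.map Sum.inl '' F)).neighborSet (.inr w)) := by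
  rw [deleteEdges_neighborSet_inr, isClique_pair, deleteEdges_adj_inl_inl, deleteEdges_adj]
  exact fun _ => ⟨w.1.2.1, fun hF => hFU _ hF w.1.2.2⟩

def inlEmbedding :
    G.deleteEdges F ↪g (addWitnesses G U M).deleteEdges (Sym2.map Sum.inl '' F) where
  toFun := Sum.inl
  inj' := Sum.inl_injective
  map_rel_iff' := deleteEdges_adj_inl_inl

end addWitnesses

theorem deletion_lifts_to_gadget_graph_general {V : Type*} (G : SimpleGraph V)
    (U : Set (Sym2 V)) (N : ℕ)
    (F : Set (Sym2 V)) (hFU : ∀ e ∈ F, e ∉ U)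
    (hfree : IsEmpty (C4 ↪g G.deleteEdges F)) :
    IsEmpty (C4 ↪g (addWitnesses G U (N + 2)).deleteEdges (Sym2.map Sum.inl '' F)) := by
  refine ⟨fun f => ?_⟩
  have hf_inl :
      ∀ i, f i ∈ Set.range (addWitnesses.inlEmbedding (U := U) (M := N + 2) (F := F)) := by
    intro i
    rcases hi : f i with a | w
    · exact ⟨a, rfl⟩
    · refine (C4_not_isClique_neighborSet i
        (f.isClique_neighborSet_of_isClique_neighborSet_apply ?_)).elim
      rw [hi]
      exact addWitnesses.isClique_deleteEdges_neighborSet_inr hFU w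
  obtain ⟨g⟩ := addWitnesses.inlEmbedding.isIndContained_of_forall_mem_range f hf_inl
  exact hfree.false g

/-- If `G'` is obtained from `G` by adding `N + 2` new vertices adjacent exactly
to `u` and `v` for each undeletable edge `uv`, and `F` is a set of edges of `G`
containing no undeletable edge such that `G - F` is `C4`-free, then `G' - F` is
`C4`-free. -/
theorem deletion_lifts_to_gadget_graph {V : Type*} (G : SimpleGraph V)
    (U : Set (Sym2 V)) (hU : U ⊆ G.edgeSet) (N : ℕ)
    (F : Set (Sym2 V)) (hFsub : F ⊆ G.edgeSet) (hFU : ∀ e ∈ F, e ∉ U)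
    (hfree : IsEmpty (C4 ↪g G.deleteEdges F)) :
    IsEmpty (C4 ↪g (addWitnesses G U (N + 2)).deleteEdges (Sym2.map Sum.inl '' F)) :=
  deletion_lifts_to_gadget_graph_general G U N F hFU hfree
end

section
/- In the cyclic ladder gadget of the previous context, let F be any set of diagonal non-edges such that G^x + F is C4-free, let A = { i : t_i b_{i+1} ∈ F } and B = { i : t_{i+1} b_i ∈ F } (indices mod 4p). Then A ∪ B = Z/4pZ, and for every i, i ∈ A implies i+1 ∉ B. -/
/-- The cyclic ladder variable gadget on `16 p` vertices. Vertices are pairs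
`(j, i)` with `i : ZMod (4 p)`, where `(0, i) = tᵢ`, `(1, i) = bᵢ`,
`(2, i) = uᵢ`, `(3, i) = dᵢ`. Edges: the cycles `tᵢ tᵢ₊₁` and `bᵢ bᵢ₊₁`, the
rungs `tᵢ bᵢ`, `uᵢ` adjacent to `tᵢ₋₁, tᵢ, tᵢ₊₁`, and `dᵢ` adjacent to
`bᵢ₋₁, bᵢ, bᵢ₊₁`. -/
def ladder (p : ℕ) : SimpleGraph (Fin 4 × ZMod (4 * p)) :=
  SimpleGraph.fromRel (fun x y =>
    (x.1 = 0 ∧ y.1 = 0 ∧ y.2 = x.2 + 1) ∨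
    (x.1 = 1 ∧ y.1 = 1 ∧ y.2 = x.2 + 1) ∨
    (x.1 = 0 ∧ y.1 = 1 ∧ y.2 = x.2) ∨
    (x.1 = 2 ∧ y.1 = 0 ∧ (y.2 = x.2 - 1 ∨ y.2 = x.2 ∨ y.2 = x.2 + 1)) ∨
    (x.1 = 3 ∧ y.1 = 1 ∧ (y.2 = x.2 - 1 ∨ y.2 = x.2 ∨ y.2 = x.2 + 1)))

/-- The diagonals `tᵢ bᵢ₊₁`. -/
def diagT (p : ℕ) : Set (Sym2 (Fin 4 × ZMod (4 * p))) :=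
  {e | ∃ i : ZMod (4 * p), e = s(((0 : Fin 4), i), ((1 : Fin 4), i + 1))}

/-- The diagonals `tᵢ₊₁ bᵢ`. -/
def diagB (p : ℕ) : Set (Sym2 (Fin 4 × ZMod (4 * p))) :=
  {e | ∃ i : ZMod (4 * p), e = s(((0 : Fin 4), i + 1), ((1 : Fin 4), i))}

/-!
Both claims come from an induced 4-cycle that `F` would otherwise leave in `G^x + F`.
If neither diagonal of the square `tᵢ tᵢ₊₁ bᵢ₊₁ bᵢ` is in `F`, that square is one.
If `tᵢ bᵢ₊₁` and `tᵢ₊₂ bᵢ₊₁` are both in `F`, then `tᵢ uᵢ₊₁ tᵢ₊₂ bᵢ₊₁` is one: the chords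
`tᵢ tᵢ₊₂` and `uᵢ₊₁ bᵢ₊₁` are missing because every diagonal joins the top to the bottom
cycle, and `tᵢ tᵢ₊₂` is not a ladder edge since `4p ∤ 1, 2, 3`.
-/

open SimpleGraph

theorem nonempty_C4_embedding_of_square {V : Type*} {G : SimpleGraph V} {a b c d : V}
    (hab : G.Adj a b) (hbc : G.Adj b c) (hcd : G.Adj c d) (hda : G.Adj d a)
    (hac : a ≠ c) (hbd : b ≠ d) (hnac : ¬ G.Adj a c) (hnbd : ¬ G.Adj b d) :
    Nonempty (C4 ↪g G) := by
  have := hab.ne; have := hbc.ne; have := hcd.ne; have := hda.ne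
  refine ⟨⟨⟨![a, b, c, d], fun x y hxy => ?_⟩, fun {x y} => ?_⟩⟩
  · fin_cases x <;> fin_cases y <;> simp_all [eq_comm]
  · show G.Adj (![a, b, c, d] x) (![a, b, c, d] y) ↔ C4.Adj x y
    fin_cases x <;> fin_cases y <;> simp_all [C4, G.adj_comm]

theorem ZMod.natCast_ne_zero_of_lt {n k : ℕ} (hk : 0 < k) (hkn : k < n) : (k : ZMod n) ≠ 0 := by
  rw [Ne, ZMod.natCast_eq_zero_iff]
  exact fun h => (Nat.le_of_dvd hk h).not_gt hkn

section Ladder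

variable {p : ℕ}

theorem ladder_adj_t_t {i j : ZMod (4 * p)} :
    (ladder p).Adj (0, i) (0, j) ↔ i ≠ j ∧ (j = i + 1 ∨ i = j + 1) := by
  simp [ladder, eq_comm]

theorem ladder_adj_b_b {i j : ZMod (4 * p)} :
    (ladder p).Adj (1, i) (1, j) ↔ i ≠ j ∧ (j = i + 1 ∨ i = j + 1) := by
  simp [ladder, eq_comm]

theorem ladder_adj_t_b {i j : ZMod (4 * p)} : (ladder p).Adj (0, i) (1, j) ↔ i = j := by
  simp [ladder, eq_comm]

theorem ladder_adj_u_t {i j : ZMod (4 * p)} :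
    (ladder p).Adj (2, i) (0, j) ↔ j = i - 1 ∨ j = i ∨ j = i + 1 := by
  simp [ladder]

theorem ladder_not_adj_u_b {i j : ZMod (4 * p)} : ¬ (ladder p).Adj (2, i) (1, j) := by
  simp [ladder]

theorem layers_of_mem_diag {x y : Fin 4 × ZMod (4 * p)} (h : s(x, y) ∈ diagT p ∪ diagB p) :
    (x.1 = 0 ∧ y.1 = 1) ∨ (x.1 = 1 ∧ y.1 = 0) := by
  rcases h with ⟨i, hi⟩ | ⟨i, hi⟩ <;>
    rcases Sym2.eq_iff.mp hi with ⟨rfl, rfl⟩ | ⟨rfl, rfl⟩ <;> simp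

end Ladder

section Squares

variable {p : ℕ} {F : Set (Sym2 (Fin 4 × ZMod (4 * p)))}

theorem nonempty_C4_embedding_of_rung_square (hp : p ≠ 0) (i : ZMod (4 * p))
    (hA : s(((0 : Fin 4), i), ((1 : Fin 4), i + 1)) ∉ F)
    (hB : s(((0 : Fin 4), i + 1), ((1 : Fin 4), i)) ∉ F) :
    Nonempty (C4 ↪g (ladder p ⊔ fromEdgeSet F)) := by
  have h1 : (1 : ZMod (4 * p)) ≠ 0 := by
    exact_mod_cast ZMod.natCast_ne_zero_of_lt (k := 1) one_pos (by omega)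
  refine nonempty_C4_embedding_of_square (a := (0, i)) (b := (0, i + 1)) (c := (1, i + 1))
    (d := (1, i)) ?_ ?_ ?_ ?_ ?_ ?_ ?_ ?_ <;>
    simp [(ladder p).adj_comm (1, i), ladder_adj_t_t, ladder_adj_b_b, ladder_adj_t_b, h1, hA,
      hB]

theorem nonempty_C4_embedding_of_cross_square (hp : p ≠ 0) (hF : F ⊆ diagT p ∪ diagB p)
    (i : ZMod (4 * p)) (hA : s(((0 : Fin 4), i), ((1 : Fin 4), i + 1)) ∈ F)
    (hB : s(((0 : Fin 4), i + 1 + 1), ((1 : Fin 4), i + 1)) ∈ F) :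
    Nonempty (C4 ↪g (ladder p ⊔ fromEdgeSet F)) := by
  have h1 : (1 : ZMod (4 * p)) ≠ 0 := by
    exact_mod_cast ZMod.natCast_ne_zero_of_lt (k := 1) one_pos (by omega)
  have h2 : i + 1 + 1 ≠ i := by
    norm_num [add_assoc]
    exact_mod_cast ZMod.natCast_ne_zero_of_lt (k := 2) two_pos (by omega)
  have h3 : i + 1 + 1 + 1 ≠ i := by
    norm_num [add_assoc]
    exact_mod_cast ZMod.natCast_ne_zero_of_lt (k := 3) three_pos (by omega)
  have hF_layers {x y} (h : s(x, y) ∈ F) := layers_of_mem_diag (hF h)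
  refine nonempty_C4_embedding_of_square (a := (0, i)) (b := (2, i + 1)) (c := (0, i + 1 + 1))
    (d := (1, i + 1)) ?_ ?_ ?_ ?_ ?_ ?_ ?_ ?_
  · exact Or.inl (((ladder p).adj_comm _ _).mp (ladder_adj_u_t.mpr (by simp)))
  · exact Or.inl (ladder_adj_u_t.mpr (by simp))
  · exact Or.inr ⟨hB, by simp⟩
  · exact Or.inr ⟨by rwa [Sym2.toRel_prop, Sym2.eq_swap], by simp⟩
  · simpa using h2.symm
  · simp
  · rintro (h | ⟨h, -⟩)
    · simp [ladder_adj_t_t, h1, h2.symm, h3.symm] at h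
    · simpa using hF_layers h
  · rintro (h | ⟨h, -⟩)
    · exact ladder_not_adj_u_b h
    · simpa using hF_layers h

end Squares

/-- For any set `F` of diagonal non-edges of the cyclic ladder gadget such that
the ladder plus `F` is `C4`-free, letting `A = {i | tᵢ bᵢ₊₁ ∈ F}` and
`B = {i | tᵢ₊₁ bᵢ ∈ F}`, we have `A ∪ B = ZMod (4 p)` and `i ∈ A` implies
`i + 1 ∉ B`. -/
theorem ladder_solution_structure (p : ℕ) (hp : 2 ≤ p)
    (F : Set (Sym2 (Fin 4 × ZMod (4 * p)))) (hF : F ⊆ diagT p ∪ diagB p)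
    (hfree : IsEmpty (C4 ↪g (ladder p ⊔ SimpleGraph.fromEdgeSet F))) :
    ({i : ZMod (4 * p) | s(((0 : Fin 4), i), ((1 : Fin 4), i + 1)) ∈ F} ∪
        {i : ZMod (4 * p) | s(((0 : Fin 4), i + 1), ((1 : Fin 4), i)) ∈ F} = Set.univ) ∧
      ∀ i : ZMod (4 * p), s(((0 : Fin 4), i), ((1 : Fin 4), i + 1)) ∈ F →
        s(((0 : Fin 4), (i + 1) + 1), ((1 : Fin 4), i + 1)) ∉ F := by
  have hp0 : p ≠ 0 := by omega
  refine ⟨Set.eq_univ_of_forall fun i => ?_, fun i hA hB => ?_⟩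
  · by_contra h
    simp only [Set.mem_union, Set.mem_ofPred_eq, not_or] at h
    exact (nonempty_C4_embedding_of_rung_square hp0 i h.1 h.2).elim hfree.false
  · exact (nonempty_C4_embedding_of_cross_square hp0 hF i hA hB).elim hfree.false
end
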